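/- For all integers g₁, g₂ ≥ 3, the polynomial in ℚ[X] whose image in ℚ(X) equals P₁₂(g₁,g₂) + P₁₂(g₂,g₁) evaluates to 0 at X = −1; that is, the intersection Euler characteristic of the fixed-determinant moduli space M (whose intersection Poincaré polynomial with respect to the top perversity equals the sum of the Poincaré polynomials of its two components M₁₂ and M₂₁, with P_t(M₂₁) for genera (g₁,g₂) equal to P₁₂(g₂,g₁)) vanishes. -/

import Mathlib

/-! Both `P₁₂(g₁,g₂)` and `P₁₂(g₂,g₁)` vanish at `X = -1`. Since
`1 + X³ = (1 + X)(1 - X + X²)` and `(1 - X²)(1 - X⁴) = (1 + X)²(1 - X)²(1 + X²)`, the function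
`Q_g` vanishes at `-1` to order `2g - 2`. Every summand of `P₁₂(g₁,g₂)` is `Q_{g₁}` times a
rational function regular at `-1`: apart from those of `Q_{g₂}`, the only denominators are
`1 + X²`, which is `2` at `-1`, and `1 - X⁴`, which is always cancelled by the factor `1 - X⁴`
multiplying the bracket that contains it. -/

open Polynomial

/-- `Q_g = ((1+X³)^{2g} − X^{2g}(1+X)^{2g}) / ((1−X²)(1−X⁴))` in `ℚ(X)`:
the Harder–Narasimhan Poincaré polynomial of the moduli space of rank-2 stable
bundles of fixed odd-degree determinant on a smooth projective curve of genus `g`. -/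
noncomputable def Qg (g : ℕ) : RatFunc ℚ :=
  ((1 + RatFunc.X ^ 3) ^ (2 * g) - RatFunc.X ^ (2 * g) * (1 + RatFunc.X) ^ (2 * g)) /
    ((1 - RatFunc.X ^ 2) * (1 - RatFunc.X ^ 4))

/-- `J_g = (1+X)^{2g}`, the Poincaré polynomial of the Jacobian. -/
noncomputable def Jg (g : ℕ) : RatFunc ℚ := (1 + RatFunc.X) ^ (2 * g)

/-- `Pⁿ = 1 + X² + ⋯ + X^{2n}`, the Poincaré polynomial of `ℙⁿ`. -/
noncomputable def Pn (n : ℕ) : RatFunc ℚ := ∑ i ∈ Finset.range (n + 1), RatFunc.X ^ (2 * i)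

/-- `K_g = 1 + X^{2g} + Σ_{0<i<2g, i even} (C(2g,i) + 2^{2g}) X^i`,
the Poincaré polynomial of the desingularized Kummer variety. -/
noncomputable def Kg (g : ℕ) : RatFunc ℚ :=
  1 + RatFunc.X ^ (2 * g) +
    ∑ i ∈ (Finset.Ioo 0 (2 * g)).filter (fun i => Even i),
      (((2 * g).choose i : RatFunc ℚ) + 2 ^ (2 * g)) * RatFunc.X ^ i

/-- `β̃₁` from Theorem 4.2 of the paper. -/
noncomputable def betaT1 (g₂ : ℕ) : RatFunc ℚ :=
  Kg g₂ * RatFunc.X ^ (4 * g₂ - 4) / (1 + RatFunc.X ^ 2) +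
    Jg g₂ * (RatFunc.X ^ (4 * g₂ - 2) / (1 - RatFunc.X ^ 4) +
      Pn (g₂ - 2) * RatFunc.X ^ (2 * g₂ - 2)) -
    2 ^ (2 * g₂) * Pn (g₂ - 1) * RatFunc.X ^ (4 * g₂ - 2) / (1 + RatFunc.X ^ 2) -
    2 ^ (2 * g₂) * (RatFunc.X ^ (6 * g₂ - 2) / (1 - RatFunc.X ^ 4) +
      Pn (g₂ - 2) * RatFunc.X ^ (4 * g₂ - 2))

/-- `β̃₂` from Theorem 4.2 of the paper. -/
noncomputable def betaT2 (g₂ : ℕ) : RatFunc ℚ :=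
  2 ^ (2 * g₂) * (RatFunc.X ^ (6 * g₂) / (1 - RatFunc.X ^ 4) +
    RatFunc.X ^ (4 * g₂ - 2) * Pn (g₂ - 1))

/-- `P₁₂(g₁,g₂) ∈ ℚ(X)`, the Poincaré polynomial of the component `M₁₂` of the moduli
space of rank-2 stable torsion-free sheaves with fixed determinant on a nodal curve
`X₁ ∪ X₂` whose smooth components have genera `g₁, g₂` (Theorem 4.2 of the paper). -/
noncomputable def P12 (g₁ g₂ : ℕ) : RatFunc ℚ :=
  Qg g₁ * (1 - RatFunc.X ^ 4) *
      (Qg g₂ + Jg g₂ * RatFunc.X ^ (2 * g₂) / (1 - RatFunc.X ^ 4) - (betaT1 g₂ + betaT2 g₂)) +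
    Qg g₁ * 2 ^ (2 * g₂) *
      (RatFunc.X ^ (6 * g₂) + RatFunc.X ^ (4 * g₂ - 2) * (1 - RatFunc.X ^ 4) * Pn (g₂ - 1)) +
    Qg g₁ *
      (Kg g₂ * RatFunc.X ^ (4 * g₂ - 4) * (1 - RatFunc.X ^ 2) +
        Jg g₂ * (RatFunc.X ^ (4 * g₂ - 2) +
          RatFunc.X ^ (2 * g₂ - 2) * (1 - RatFunc.X ^ 4) * Pn (g₂ - 2)) -
        2 ^ (2 * g₂) *
          (RatFunc.X ^ (6 * g₂ - 2) +
            RatFunc.X ^ (4 * g₂ - 2) * (1 - RatFunc.X ^ 4) * Pn (g₂ - 2) +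
            RatFunc.X ^ (4 * g₂ - 2) * (1 - RatFunc.X ^ 2) * Pn (g₂ - 1))) +
    Qg g₁ * Qg g₂ * RatFunc.X ^ 2 * (1 + 2 * RatFunc.X ^ 2 + RatFunc.X ^ 4)

namespace RatFunc

variable {K : Type*} [Field K]

theorem algebraMap_ne_zero_of_eval_ne_zero {c : K} {b : K[X]} (hb : b.eval c ≠ 0) :
    algebraMap K[X] (RatFunc K) b ≠ 0 :=
  algebraMap_ne_zero fun h => hb (by simp [h])

/-- The local ring of `K[X]` at `c`, as a subring of `K(X)`. -/
def regularAt (c : K) : Subring (RatFunc K) where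
  carrier := {f | ∃ a b : K[X], b.eval c ≠ 0 ∧ f = algebraMap _ _ a / algebraMap _ _ b}
  mul_mem' := by
    rintro _ _ ⟨a₁, b₁, h₁, rfl⟩ ⟨a₂, b₂, h₂, rfl⟩
    exact ⟨a₁ * a₂, b₁ * b₂, by simp [h₁, h₂], by simp only [map_mul]; ring⟩
  one_mem' := ⟨1, 1, by simp, by simp⟩
  add_mem' := by
    rintro _ _ ⟨a₁, b₁, h₁, rfl⟩ ⟨a₂, b₂, h₂, rfl⟩
    refine ⟨a₁ * b₂ + a₂ * b₁, b₁ * b₂, by simp [h₁, h₂], ?_⟩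
    rw [div_add_div _ _ (algebraMap_ne_zero_of_eval_ne_zero h₁)
      (algebraMap_ne_zero_of_eval_ne_zero h₂)]
    simp only [map_add, map_mul]
    ring
  zero_mem' := ⟨0, 1, by simp, by simp⟩
  neg_mem' := by
    rintro _ ⟨a, b, h, rfl⟩
    exact ⟨-a, b, h, by rw [map_neg, neg_div]⟩

theorem algebraMap_mem_regularAt (c : K) (p : K[X]) :
    algebraMap K[X] (RatFunc K) p ∈ regularAt c :=
  ⟨p, 1, by simp, by simp⟩

theorem X_mem_regularAt (c : K) : (X : RatFunc K) ∈ regularAt c := by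
  simpa using algebraMap_mem_regularAt c Polynomial.X

theorem inv_algebraMap_mem_regularAt {c : K} {b : K[X]} (hb : b.eval c ≠ 0) :
    (algebraMap K[X] (RatFunc K) b)⁻¹ ∈ regularAt c :=
  ⟨1, b, hb, by simp⟩

def VanishesAt (c : K) (f : RatFunc K) : Prop :=
  ∃ r ∈ regularAt c, f = (X - C c) * r

theorem vanishesAt_X_sub_C (c : K) : VanishesAt c (X - C c) :=
  ⟨1, one_mem _, (mul_one _).symm⟩

theorem vanishesAt_one_add_X : VanishesAt (-1 : K) (1 + X) := by
  simpa [sub_eq_add_neg, add_comm] using vanishesAt_X_sub_C (-1 : K)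

namespace VanishesAt

variable {c : K} {f g : RatFunc K}

theorem add (hf : VanishesAt c f) (hg : VanishesAt c g) : VanishesAt c (f + g) := by
  obtain ⟨r, hr, rfl⟩ := hf
  obtain ⟨s, hs, rfl⟩ := hg
  exact ⟨r + s, add_mem hr hs, (mul_add _ _ _).symm⟩

theorem mul_mem (hf : VanishesAt c f) (hg : g ∈ regularAt c) : VanishesAt c (f * g) := by
  obtain ⟨r, hr, rfl⟩ := hf
  exact ⟨r * g, Subring.mul_mem _ hr hg, mul_assoc _ _ _⟩

theorem mem_regularAt (hf : VanishesAt c f) : f ∈ regularAt c := by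
  obtain ⟨r, hr, rfl⟩ := hf
  refine Subring.mul_mem _ (sub_mem (X_mem_regularAt c) ?_) hr
  simpa using algebraMap_mem_regularAt c (Polynomial.C c)

theorem eval_eq_zero {p : K[X]} (hp : VanishesAt c (algebraMap K[X] (RatFunc K) p)) :
    p.eval c = 0 := by
  obtain ⟨_, ⟨a, b, hb, rfl⟩, he⟩ := hp
  have : p * b = (Polynomial.X - Polynomial.C c) * a := by
    apply IsFractionRing.injective K[X] (RatFunc K)
    rw [map_mul, he, map_mul, map_sub]
    field_simp [algebraMap_ne_zero_of_eval_ne_zero hb]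
    simp only [algebraMap_X, algebraMap_C]
    ring
  simpa [hb] using congrArg (Polynomial.eval c) this

end VanishesAt

end RatFunc

open RatFunc (regularAt VanishesAt)

theorem Qg_add_two (n : ℕ) :
    Qg (n + 2) = (1 + RatFunc.X) ^ (2 * n + 2) *
      ((1 - RatFunc.X + RatFunc.X ^ 2) ^ (2 * n + 4) - RatFunc.X ^ (2 * n + 4)) /
      ((1 - RatFunc.X) ^ 2 * (1 + RatFunc.X ^ 2)) := by
  have h₁ : (1 - RatFunc.X : RatFunc ℚ) ≠ 0 := by
    have := RatFunc.algebraMap_ne_zero_of_eval_ne_zero (c := (0 : ℚ)) (b := 1 - X) (by simp)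
    rwa [map_sub, map_one, RatFunc.algebraMap_X] at this
  have h₂ : (1 + RatFunc.X : RatFunc ℚ) ≠ 0 := by
    have := RatFunc.algebraMap_ne_zero_of_eval_ne_zero (c := (0 : ℚ)) (b := 1 + X) (by simp)
    rwa [map_add, map_one, RatFunc.algebraMap_X] at this
  have h₃ : (1 + RatFunc.X ^ 2 : RatFunc ℚ) ≠ 0 := by
    have := RatFunc.algebraMap_ne_zero_of_eval_ne_zero (c := (0 : ℚ)) (b := 1 + X ^ 2) (by simp)
    rwa [map_add, map_one, map_pow, RatFunc.algebraMap_X] at this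
  have hden : (1 - RatFunc.X ^ 2 : RatFunc ℚ) * (1 - RatFunc.X ^ 4) =
      (1 + RatFunc.X) ^ 2 * ((1 - RatFunc.X) ^ 2 * (1 + RatFunc.X ^ 2)) := by
    ring
  have hnum : (1 + RatFunc.X ^ 3 : RatFunc ℚ) =
      (1 + RatFunc.X) * (1 - RatFunc.X + RatFunc.X ^ 2) := by
    ring
  rw [Qg, hden, hnum, mul_pow, show 2 * (n + 2) = 2 * n + 4 by ring]
  field_simp
  ring

theorem vanishesAt_Qg {g : ℕ} (hg : 2 ≤ g) : VanishesAt (-1) (Qg g) := by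
  obtain ⟨n, rfl⟩ := Nat.exists_eq_add_of_le' hg
  have hden : ((1 - RatFunc.X) ^ 2 * (1 + RatFunc.X ^ 2))⁻¹ ∈ regularAt (-1 : ℚ) := by
    have := RatFunc.inv_algebraMap_mem_regularAt (c := (-1 : ℚ))
      (b := (1 - X) ^ 2 * (1 + X ^ 2)) (by norm_num)
    simpa only [map_mul, map_sub, map_add, map_one, map_pow, RatFunc.algebraMap_X] using this
  rw [Qg_add_two, div_eq_mul_inv, pow_succ', mul_assoc, mul_assoc]
  refine RatFunc.vanishesAt_one_add_X.mul_mem ?_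
  apply_rules (maxDepth := 200) [hden, RatFunc.X_mem_regularAt, one_mem, add_mem, sub_mem,
    Subring.mul_mem, pow_mem]

theorem Jg_mem_regularAt (c : ℚ) (g : ℕ) : Jg g ∈ regularAt c := by
  apply_rules [pow_mem, add_mem, one_mem, RatFunc.X_mem_regularAt]

theorem Pn_mem_regularAt (c : ℚ) (n : ℕ) : Pn n ∈ regularAt c :=
  sum_mem fun _ _ => pow_mem (RatFunc.X_mem_regularAt c) _

theorem Kg_mem_regularAt (c : ℚ) (g : ℕ) : Kg g ∈ regularAt c := by
  refine add_mem (add_mem (one_mem _) (pow_mem (RatFunc.X_mem_regularAt c) _)) (sum_mem ?_)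
  intro i _
  apply_rules [Subring.mul_mem, natCast_mem, ofNat_mem, add_mem, pow_mem, RatFunc.X_mem_regularAt]

theorem one_sub_X_pow_four_ne_zero : (1 - RatFunc.X ^ 4 : RatFunc ℚ) ≠ 0 := by
  have := RatFunc.algebraMap_ne_zero_of_eval_ne_zero (c := (0 : ℚ)) (b := 1 - X ^ 4) (by simp)
  rwa [map_sub, map_one, map_pow, RatFunc.algebraMap_X] at this

theorem inv_one_add_X_sq_mem_regularAt : (1 + RatFunc.X ^ 2)⁻¹ ∈ regularAt (-1 : ℚ) := by
  have := RatFunc.inv_algebraMap_mem_regularAt (c := (-1 : ℚ)) (b := 1 + X ^ 2) (by norm_num)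
  rwa [map_add, map_one, map_pow, RatFunc.algebraMap_X] at this

theorem one_sub_X_pow_four_mul_mem_regularAt {g : ℕ} (hg : 2 ≤ g) :
    (1 - RatFunc.X ^ 4) * (Qg g + Jg g * RatFunc.X ^ (2 * g) / (1 - RatFunc.X ^ 4) -
      (betaT1 g + betaT2 g)) ∈ regularAt (-1 : ℚ) := by
  have hQ := (vanishesAt_Qg hg).mem_regularAt
  unfold betaT1 betaT2
  simp only [mul_add, mul_sub, mul_left_comm (1 - RatFunc.X ^ 4 : RatFunc ℚ),
    mul_div_cancel₀ _ one_sub_X_pow_four_ne_zero]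
  simp only [div_eq_mul_inv]
  apply_rules (maxDepth := 400) [hQ, Jg_mem_regularAt, Kg_mem_regularAt, Pn_mem_regularAt,
    inv_one_add_X_sq_mem_regularAt, RatFunc.X_mem_regularAt, one_mem, ofNat_mem, add_mem, sub_mem,
    Subring.mul_mem, pow_mem]

theorem vanishesAt_P12 {g₁ g₂ : ℕ} (h₁ : 2 ≤ g₁) (h₂ : 2 ≤ g₂) :
    VanishesAt (-1) (P12 g₁ g₂) := by
  have hQ₁ := vanishesAt_Qg h₁
  have hQ₂ := (vanishesAt_Qg h₂).mem_regularAt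
  have hpole := one_sub_X_pow_four_mul_mem_regularAt h₂
  unfold P12
  rw [mul_assoc (Qg g₁) (1 - RatFunc.X ^ 4)]
  apply_rules (maxDepth := 400) [RatFunc.VanishesAt.add, RatFunc.VanishesAt.mul_mem, hQ₁, hpole,
    hQ₂, Jg_mem_regularAt, Kg_mem_regularAt, Pn_mem_regularAt, RatFunc.X_mem_regularAt, one_mem,
    ofNat_mem, add_mem, sub_mem, Subring.mul_mem, pow_mem]

/-- For all integers `g₁, g₂ ≥ 3`, the polynomial in `ℚ[X]` whose image in `ℚ(X)` equals
`P₁₂(g₁,g₂) + P₁₂(g₂,g₁)` evaluates to `0` at `X = −1`: the intersection Euler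
characteristic of the fixed-determinant moduli space `M` (whose intersection Poincaré
polynomial with respect to the top perversity is the sum of the Poincaré polynomials of
its two components `M₁₂` and `M₂₁`) vanishes. -/
theorem intersection_euler_char_zero (g₁ g₂ : ℕ) (h₁ : 3 ≤ g₁) (h₂ : 3 ≤ g₂) (p : ℚ[X])
    (hp : algebraMap ℚ[X] (RatFunc ℚ) p = P12 g₁ g₂ + P12 g₂ g₁) :
    p.eval (-1) = 0 :=
  RatFunc.VanishesAt.eval_eq_zero <| hp ▸
    (vanishesAt_P12 (by omega) (by omega)).add (vanishesAt_P12 (by omega) (by omega))
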